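/- arXiv:2604.23201 — 2 statements merged into one kernel-verified Lean document; each statement's English description precedes it below -/
import Mathlib

section
/- Let X be a locally compact, locally connected Hausdorff space and G a group of homeomorphisms of X. Let αX = X ∪ {∞} be the one-point compactification and for g ∈ G let ĝ be its extension to αX with ĝ(∞) = ∞. Then for any R, S in the closure of {Γ(ĝ) : g ∈ G} in the hyperspace of closed subsets of αX × αX with the Vietoris topology, R ∩ (X × X) = S ∩ (X × X) implies R = S. -/
/-- The hyperspace of closed subsets of a topological space (including `∅`). -/
abbrev HClosed (Z : Type*) [TopologicalSpace Z] := {A : Set Z // IsClosed A}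

/-- The Vietoris topology on the hyperspace of closed subsets: generated by the sets
`{A | A ∩ W ≠ ∅}` and `{A | A ⊆ W}` for `W` open. -/
def vietorisTop (Z : Type*) [TopologicalSpace Z] : TopologicalSpace (HClosed Z) :=
  TopologicalSpace.generateFrom
    ({s | ∃ W : Set Z, IsOpen W ∧ s = {A : HClosed Z | ((A : Set Z) ∩ W).Nonempty}} ∪
     {s | ∃ W : Set Z, IsOpen W ∧ s = {A : HClosed Z | (A : Set Z) ⊆ W}})

/-!
Points of `X × X` are handled by the hypothesis, and `(∞, ∞)` lies on every graph, hence on every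
limit of graphs. It remains to see that a point `(y, ∞)` of `R` lies in `S`; the case `(∞, y)`
is the same after swapping coordinates, which replaces each `g` by `g⁻¹`.
If `(y, ∞) ∉ S`, then `S` sends a neighbourhood of `y` into a compact `K ⊆ X`, and hence so does
the part of `R` over `X × X`. Take a connected open `V ∋ y` inside a compact neighbourhood `C`
and an open `A ⊇ K` with compact closure. Then `R` sends `C` into the disjoint open sets `A` and
`αX \ cl A`, and sends `V` into both (to `∞` and to a point of `K`). Some graph `Γ(ĝ)` close
enough to `R` does the same, so the connected set `g(V)` is split by `A` and `X \ cl A`.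
-/

open OnePoint Set Filter Topology

section Vietoris

variable {Z : Type*} [TopologicalSpace Z]

theorem isOpen_vietoris_setOf_subset {W : Set Z} (hW : IsOpen W) :
    IsOpen[vietorisTop Z] {A : HClosed Z | (A : Set Z) ⊆ W} :=
  TopologicalSpace.isOpen_generateFrom_of_mem (Or.inr ⟨W, hW, rfl⟩)

theorem isOpen_vietoris_setOf_inter_nonempty {W : Set Z} (hW : IsOpen W) :
    IsOpen[vietorisTop Z] {A : HClosed Z | ((A : Set Z) ∩ W).Nonempty} :=
  TopologicalSpace.isOpen_generateFrom_of_mem (Or.inl ⟨W, hW, rfl⟩)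

theorem inter_nonempty_of_mem_vietoris_closure {s : Set (HClosed Z)} {T : HClosed Z}
    (hT : T ∈ closure[vietorisTop Z] s) {C : Set Z} (hC : IsClosed C)
    (hs : ∀ A ∈ s, ((A : Set Z) ∩ C).Nonempty) : ((T : Set Z) ∩ C).Nonempty := by
  let _ := vietorisTop Z
  by_contra hTC
  obtain ⟨A, hAC, hA⟩ := mem_closure_iff.mp hT _
    (isOpen_vietoris_setOf_subset hC.isOpen_compl) (fun z hz hzC => hTC ⟨z, hz, hzC⟩)
  obtain ⟨z, hzA, hzC⟩ := hs A hA
  exact hAC hzA hzC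

theorem inter_nonempty_of_mem_vietoris_closure_of_isPreconnected_image
    {s : Set (HClosed (Z × Z))} {T : HClosed (Z × Z)} (hT : T ∈ closure[vietorisTop (Z × Z)] s)
    {O C U₁ U₂ : Set Z} (hs : ∀ A ∈ s, IsPreconnected (SetRel.image (A : Set (Z × Z)) O))
    (hO : IsOpen O) (hC : IsClosed C) (hOC : O ⊆ C) (hU₁ : IsOpen U₁) (hU₂ : IsOpen U₂)
    (hTC : SetRel.image (T : Set (Z × Z)) C ⊆ U₁ ∪ U₂)
    (hTU₁ : (SetRel.image (T : Set (Z × Z)) O ∩ U₁).Nonempty)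
    (hTU₂ : (SetRel.image (T : Set (Z × Z)) O ∩ U₂).Nonempty) :
    (U₁ ∩ U₂).Nonempty := by
  let _ := vietorisTop (Z × Z)
  have inter_prod_nonempty {A : HClosed (Z × Z)} {U : Set Z}
      (h : (SetRel.image (A : Set (Z × Z)) O ∩ U).Nonempty) :
      ((A : Set (Z × Z)) ∩ O ×ˢ U).Nonempty := by
    obtain ⟨b, ⟨a, ha, hab⟩, hb⟩ := h
    exact ⟨(a, b), hab, ha, hb⟩
  have image_inter_nonempty {A : HClosed (Z × Z)} {U : Set Z}
      (h : ((A : Set (Z × Z)) ∩ O ×ˢ U).Nonempty) :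
      (SetRel.image (A : Set (Z × Z)) O ∩ U).Nonempty := by
    obtain ⟨⟨a, b⟩, hab, ha, hb⟩ := h
    exact ⟨b, ⟨a, ha, hab⟩, hb⟩
  have hW : IsOpen (C ×ˢ (U₁ ∪ U₂)ᶜ)ᶜ :=
    (hC.prod (hU₁.union hU₂).isClosed_compl).isOpen_compl
  obtain ⟨A, ⟨⟨hAW, hAU₁⟩, hAU₂⟩, hA⟩ := mem_closure_iff.mp hT _
    (((isOpen_vietoris_setOf_subset hW).inter
      (isOpen_vietoris_setOf_inter_nonempty (hO.prod hU₁))).inter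
      (isOpen_vietoris_setOf_inter_nonempty (hO.prod hU₂)))
    ⟨⟨fun ⟨a, b⟩ hab ⟨ha, hb⟩ => hb (hTC ⟨a, ha, hab⟩), inter_prod_nonempty hTU₁⟩,
      inter_prod_nonempty hTU₂⟩
  have hAO : SetRel.image (A : Set (Z × Z)) O ⊆ U₁ ∪ U₂ := by
    rintro b ⟨a, ha, hab⟩
    by_contra hb
    exact hAW hab ⟨hOC ha, hb⟩
  obtain ⟨b, -, hb⟩ := hs A hA U₁ U₂ hU₁ hU₂ hAO (image_inter_nonempty hAU₁)
    (image_inter_nonempty hAU₂)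
  exact ⟨b, hb⟩

def HClosed.comap {Z' : Type*} [TopologicalSpace Z'] (e : Z ≃ₜ Z') (A : HClosed Z') :
    HClosed Z :=
  ⟨e ⁻¹' A, A.2.preimage e.continuous⟩

theorem HClosed.continuous_comap {Z' : Type*} [TopologicalSpace Z'] (e : Z ≃ₜ Z') :
    Continuous[vietorisTop Z', vietorisTop Z] (HClosed.comap e) := by
  refine continuous_generateFrom_iff.mpr ?_
  rintro _ (⟨W, hW, rfl⟩ | ⟨W, hW, rfl⟩)
  · convert isOpen_vietoris_setOf_inter_nonempty (e.isOpenMap W hW) using 1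
    ext A
    change (e ⁻¹' A ∩ W).Nonempty ↔ ((A : Set Z') ∩ e '' W).Nonempty
    rw [inter_comm (A : Set Z'), image_inter_nonempty_iff, inter_comm]
  · convert isOpen_vietoris_setOf_subset (e.isOpenMap W hW) using 1
    ext A
    change e ⁻¹' A ⊆ W ↔ (A : Set Z') ⊆ e '' W
    rw [← e.image_symm, image_subset_iff, e.preimage_symm]

end Vietoris

section OnePoint

variable {X : Type*}

local notation "αX²" => OnePoint X × OnePoint X

/-- The graph `Γ(f̂)` of the extension `f̂` of `f` to `αX` with `f̂ ∞ = ∞`. -/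
def extGraph (f : X → X) : Set αX² :=
  {p | (p.1 = ∞ ∧ p.2 = ∞) ∨ ∃ x : X, p.1 = x ∧ p.2 = (f x : OnePoint X)}

theorem coe_mem_extGraph (f : X → X) (x : X) :
    ((x : OnePoint X), (f x : OnePoint X)) ∈ extGraph f :=
  Or.inr ⟨x, rfl, rfl⟩

theorem image_extGraph_image_coe (f : X → X) (V : Set X) :
    SetRel.image (extGraph f) ((↑) '' V) = ((↑) '' (f '' V) : Set (OnePoint X)) := by
  ext b
  constructor
  · rintro ⟨_, ⟨v, hv, rfl⟩, ⟨hvi, -⟩ | ⟨x, hvx, rfl⟩⟩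
    · exact absurd hvi (coe_ne_infty v)
    · exact ⟨f x, ⟨x, coe_injective hvx ▸ hv, rfl⟩, rfl⟩
  · rintro ⟨_, ⟨v, hv, rfl⟩, rfl⟩
    exact ⟨v, ⟨v, hv, rfl⟩, coe_mem_extGraph f v⟩

theorem preimage_swap_extGraph (e : X ≃ X) :
    Prod.swap ⁻¹' extGraph e = extGraph e.symm := by
  ext ⟨a, b⟩
  constructor
  · rintro (⟨rfl, rfl⟩ | ⟨x, rfl, rfl⟩)
    · exact Or.inl ⟨rfl, rfl⟩
    · exact Or.inr ⟨e x, rfl, by simp⟩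
  · rintro (⟨rfl, rfl⟩ | ⟨x, rfl, rfl⟩)
    · exact Or.inl ⟨rfl, rfl⟩
    · exact Or.inr ⟨e.symm x, rfl, by simp⟩

theorem mem_of_inter_finite_eq {T T' : Set αX²}
    (h : T ∩ {p | p.1 ≠ ∞ ∧ p.2 ≠ ∞} = T' ∩ {p | p.1 ≠ ∞ ∧ p.2 ≠ ∞}) {a b : X}
    (hab : ((a : OnePoint X), (b : OnePoint X)) ∈ T) :
    ((a : OnePoint X), (b : OnePoint X)) ∈ T' :=
  have hab' : ((a : OnePoint X), (b : OnePoint X)) ∈ T ∩ {p | p.1 ≠ ∞ ∧ p.2 ≠ ∞} :=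
    ⟨hab, coe_ne_infty a, coe_ne_infty b⟩
  (h ▸ hab').1

variable [TopologicalSpace X]

theorem exists_mem_nhds_image_subset_of_coe_infty_notMem {T : Set αX²}
    (hT : IsClosed T) {y : X} (hy : ((y : OnePoint X), ∞) ∉ T) :
    ∃ N ∈ 𝓝 y, ∃ K : Set X, IsCompact K ∧ SetRel.image T ((↑) '' N) ⊆ (↑) '' K := by
  have hT : Tᶜ ∈ 𝓝 ((y : OnePoint X), ∞) := hT.isOpen_compl.mem_nhds hy
  rw [nhds_prod_eq] at hT
  obtain ⟨t₁, ht₁, t₂, ht₂, ht⟩ := mem_prod_iff.mp hT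
  obtain ⟨K, ⟨-, hK⟩, hKt₂⟩ := hasBasis_nhds_infty.mem_iff.mp ht₂
  refine ⟨(↑) ⁻¹' t₁, continuous_coe.continuousAt.preimage_mem_nhds ht₁, K, hK, ?_⟩
  rintro b ⟨_, ⟨x, hx, rfl⟩, hxb⟩
  induction b using OnePoint.rec with
  | infty =>
    exact (ht (show ((x : OnePoint X), ∞) ∈ t₁ ×ˢ t₂ from ⟨hx, hKt₂ (Or.inr rfl)⟩) hxb).elim
  | coe z =>
    by_contra hz
    exact ht (show ((x : OnePoint X), (z : OnePoint X)) ∈ t₁ ×ˢ t₂ from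
      ⟨hx, hKt₂ (Or.inl ⟨z, fun hzK => hz ⟨z, hzK, rfl⟩, rfl⟩)⟩) hxb

theorem infty_infty_mem_of_mem_vietoris_closure {𝒢 : Set (HClosed αX²)}
    (h𝒢 : ∀ Γ ∈ 𝒢, ∃ f : X → X, (Γ : Set αX²) = extGraph f)
    {T : HClosed αX²} (hT : T ∈ closure[vietorisTop αX²] 𝒢) :
    ((∞ : OnePoint X), (∞ : OnePoint X)) ∈ (T : Set αX²) := by
  have hs (Γ) (hΓ : Γ ∈ 𝒢) : ((Γ : Set αX²) ∩ {∞} ×ˢ {∞}).Nonempty := by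
    obtain ⟨f, hf⟩ := h𝒢 Γ hΓ
    exact ⟨(∞, ∞), hf ▸ Or.inl ⟨rfl, rfl⟩, rfl, rfl⟩
  obtain ⟨⟨a, b⟩, hp, (rfl : a = ∞), (rfl : b = ∞)⟩ :=
    inter_nonempty_of_mem_vietoris_closure hT (isClosed_infty.prod isClosed_infty) hs
  exact hp

theorem coe_infty_mem_of_mem_vietoris_closure [T2Space X] [LocallyCompactSpace X]
    [LocallyConnectedSpace X] {𝒢 : Set (HClosed αX²)}
    (h𝒢 : ∀ Γ ∈ 𝒢, ∃ f : X → X, Continuous f ∧ (Γ : Set αX²) = extGraph f)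
    {R S : HClosed αX²} (hR : R ∈ closure[vietorisTop αX²] 𝒢)
    (hS : S ∈ closure[vietorisTop αX²] 𝒢)
    (hRS : (R : Set αX²) ∩ {p | p.1 ≠ ∞ ∧ p.2 ≠ ∞} = (S : Set αX²) ∩ {p | p.1 ≠ ∞ ∧ p.2 ≠ ∞})
    {y : X} (hy : ((y : OnePoint X), ∞) ∈ (R : Set αX²)) :
    ((y : OnePoint X), ∞) ∈ (S : Set αX²) := by
  by_contra hyS
  obtain ⟨N, hN, K, hK, hSK⟩ := exists_mem_nhds_image_subset_of_coe_infty_notMem S.2 hyS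
  obtain ⟨C, hCN, hCsub, hC⟩ := local_compact_nhds hN
  obtain ⟨V, ⟨hV, hyV, hVconn⟩, hVC⟩ :=
    (LocallyConnectedSpace.open_connected_basis y).mem_iff.mp hCN
  obtain ⟨A, hA, hKA, hAcl⟩ := exists_isOpen_superset_and_isCompact_closure hK
  obtain ⟨k, hkK, hyk⟩ : ∃ k ∈ K, ((y : OnePoint X), (k : OnePoint X)) ∈ (R : Set αX²) := by
    obtain ⟨⟨_, b⟩, hyb, rfl, -⟩ := inter_nonempty_of_mem_vietoris_closure hS
      ((isClosed_singleton (x := (y : OnePoint X))).prod isClosed_univ) fun Γ hΓ => by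
        obtain ⟨f, -, hf⟩ := h𝒢 Γ hΓ
        exact ⟨_, hf ▸ coe_mem_extGraph f y, mem_singleton _, trivial⟩
    obtain ⟨k, hk, rfl⟩ := hSK ⟨_, ⟨y, mem_of_mem_nhds hN, rfl⟩, hyb⟩
    exact ⟨k, hk, mem_of_inter_finite_eq hRS.symm hyb⟩
  have hRC : SetRel.image (R : Set αX²) ((↑) '' C) ⊆ (↑) '' A ∪ ((↑) '' closure A)ᶜ := by
    rintro b ⟨_, ⟨c, hc, rfl⟩, hcb⟩
    induction b using OnePoint.rec with
    | infty => exact Or.inr infty_notMem_image_coe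
    | coe b =>
      obtain ⟨k, hk, hkb⟩ := hSK ⟨_, ⟨c, hCsub hc, rfl⟩, mem_of_inter_finite_eq hRS hcb⟩
      exact Or.inl ⟨k, hKA hk, hkb⟩
  have hpreconn (Γ) (hΓ : Γ ∈ 𝒢) : IsPreconnected (SetRel.image (Γ : Set αX²) ((↑) '' V)) := by
    obtain ⟨f, hf, hΓf⟩ := h𝒢 Γ hΓ
    rw [hΓf, image_extGraph_image_coe]
    exact (hVconn.isPreconnected.image f hf.continuousOn).image _ continuous_coe.continuousOn
  obtain ⟨_, ⟨a, ha, rfl⟩, haA⟩ :=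
    inter_nonempty_of_mem_vietoris_closure_of_isPreconnected_image hR hpreconn
      (isOpen_image_coe.2 hV) (isClosed_image_coe.2 ⟨hC.isClosed, hC⟩) (image_mono hVC)
      (isOpen_image_coe.2 hA) (isOpen_compl_image_coe.2 ⟨isClosed_closure, hAcl⟩) hRC
      ⟨k, ⟨y, ⟨y, hyV, rfl⟩, hyk⟩, k, hKA hkK, rfl⟩
      ⟨∞, ⟨y, ⟨y, hyV, rfl⟩, hy⟩, infty_notMem_image_coe⟩
  exact haA ⟨a, subset_closure ha, rfl⟩

theorem infty_coe_mem_of_mem_vietoris_closure [T2Space X] [LocallyCompactSpace X]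
    [LocallyConnectedSpace X] {𝒢 : Set (HClosed αX²)}
    (h𝒢 : ∀ Γ ∈ 𝒢, ∃ e : X ≃ₜ X, (Γ : Set αX²) = extGraph e)
    {R S : HClosed αX²} (hR : R ∈ closure[vietorisTop αX²] 𝒢)
    (hS : S ∈ closure[vietorisTop αX²] 𝒢)
    (hRS : (R : Set αX²) ∩ {p | p.1 ≠ ∞ ∧ p.2 ≠ ∞} = (S : Set αX²) ∩ {p | p.1 ≠ ∞ ∧ p.2 ≠ ∞})
    {y : X} (hy : (∞, (y : OnePoint X)) ∈ (R : Set αX²)) :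
    (∞, (y : OnePoint X)) ∈ (S : Set αX²) := by
  let _ := vietorisTop αX²
  let σ := HClosed.comap (Homeomorph.prodComm (OnePoint X) (OnePoint X))
  have hσ : Continuous σ := HClosed.continuous_comap _
  refine coe_infty_mem_of_mem_vietoris_closure (𝒢 := σ '' 𝒢) ?_
    (mem_closure_image hσ.continuousAt hR) (mem_closure_image hσ.continuousAt hS) ?_ hy
  · rintro _ ⟨Γ, hΓ, rfl⟩
    obtain ⟨e, he⟩ := h𝒢 Γ hΓ
    refine ⟨e.symm, e.symm.continuous, ?_⟩
    simpa only [σ, HClosed.comap, Homeomorph.coe_prodComm, he, Homeomorph.coe_toEquiv,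
      Homeomorph.coe_symm_toEquiv] using preimage_swap_extGraph e.toEquiv
  · ext ⟨a, b⟩
    simpa [σ, HClosed.comap, and_comm] using Set.ext_iff.mp hRS (b, a)

theorem subset_of_mem_vietoris_closure [T2Space X] [LocallyCompactSpace X]
    [LocallyConnectedSpace X] {𝒢 : Set (HClosed αX²)}
    (h𝒢 : ∀ Γ ∈ 𝒢, ∃ e : X ≃ₜ X, (Γ : Set αX²) = extGraph e)
    {R S : HClosed αX²} (hR : R ∈ closure[vietorisTop αX²] 𝒢)
    (hS : S ∈ closure[vietorisTop αX²] 𝒢)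
    (hRS : (R : Set αX²) ∩ {p | p.1 ≠ ∞ ∧ p.2 ≠ ∞} = (S : Set αX²) ∩ {p | p.1 ≠ ∞ ∧ p.2 ≠ ∞}) :
    (R : Set αX²) ⊆ S := by
  have h𝒢' (Γ) (hΓ : Γ ∈ 𝒢) : ∃ f : X → X, Continuous f ∧ (Γ : Set αX²) = extGraph f :=
    let ⟨e, he⟩ := h𝒢 Γ hΓ
    ⟨e, e.continuous, he⟩
  rintro ⟨a, b⟩ hab
  induction a using OnePoint.rec <;> induction b using OnePoint.rec
  · exact infty_infty_mem_of_mem_vietoris_closure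
      (fun Γ hΓ => (h𝒢' Γ hΓ).imp fun _ => And.right) hS
  · exact infty_coe_mem_of_mem_vietoris_closure h𝒢 hR hS hRS hab
  · exact coe_infty_mem_of_mem_vietoris_closure h𝒢' hR hS hRS hab
  · exact mem_of_inter_finite_eq hRS hab

end OnePoint

/-- For a group `G` of homeomorphisms of a locally compact, locally connected Hausdorff space
`X`, two members of the closure (in the Vietoris hyperspace of `αX × αX`) of the graphs of the
extensions `ĝ` to the one-point compactification that agree on `X × X` are equal. -/
theorem stmt_11 {X : Type*} [TopologicalSpace X] [T2Space X] [LocallyCompactSpace X]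
    [LocallyConnectedSpace X]
    (G : Subgroup (Equiv.Perm X))
    (hhomeo : ∀ g : G, Continuous ⇑(g : Equiv.Perm X))
    (ι : G → HClosed (OnePoint X × OnePoint X))
    (hι : ∀ g : G, (ι g : Set (OnePoint X × OnePoint X)) =
      {p : OnePoint X × OnePoint X |
        (p.1 = OnePoint.infty ∧ p.2 = OnePoint.infty) ∨
        ∃ x : X, p.1 = (x : OnePoint X) ∧ p.2 = (((g : Equiv.Perm X) x : X) : OnePoint X)})
    (R S : HClosed (OnePoint X × OnePoint X))
    (hR : R ∈ @closure _ (vietorisTop (OnePoint X × OnePoint X)) (Set.range ι))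
    (hS : S ∈ @closure _ (vietorisTop (OnePoint X × OnePoint X)) (Set.range ι))
    (hRS : (R : Set (OnePoint X × OnePoint X)) ∩
        {p | p.1 ≠ OnePoint.infty ∧ p.2 ≠ OnePoint.infty} =
      (S : Set (OnePoint X × OnePoint X)) ∩
        {p | p.1 ≠ OnePoint.infty ∧ p.2 ≠ OnePoint.infty}) :
    R = S := by
  have hgraphs : ∀ Γ ∈ range ι, ∃ e : X ≃ₜ X, (Γ : Set (OnePoint X × OnePoint X)) = extGraph e := by
    rintro _ ⟨g, rfl⟩
    exact ⟨⟨g, hhomeo g, hhomeo g⁻¹⟩, hι g⟩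
  exact Subtype.ext (subset_antisymm (subset_of_mem_vietoris_closure hgraphs hR hS hRS)
    (subset_of_mem_vietoris_closure hgraphs hS hR hRS.symm))
end

section
/- Let X be an infinite ultrahomogeneous linear order and K a complete linear order with least element ⊥ and greatest element ⊤, endowed with the order topology, containing X and such that every k ∈ K satisfies k = sup{x ∈ X : x ≤ k} and k = inf{x ∈ X : k ≤ x}; for g ∈ Aut(X) let ĝ be the extension of g to K given by ĝ(k) = sup{g(x) : x ∈ X, x ≤ k}. Set Y = K ∖ {⊥, ⊤} and let C be the closure of {Γ(ĝ) : g ∈ Aut(X)} in the hyperspace of closed subsets of K × K with the Vietoris topology. Then: (i) if A, B ∈ C satisfy A ∩ (Y × Y) = B ∩ (Y × Y) ≠ ∅, then A = B; (ii) the only elements A ∈ C with A ∩ (Y × Y) = ∅ are (K × {⊥}) ∪ ({⊤} × K) and ({⊥} × K) ∪ (K × {⊤}). -/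
/-- A linear order is ultrahomogeneous if any increasing finite tuple can be mapped onto any
other increasing tuple of the same length by an order-automorphism. -/
def UltrahomogeneousOrder (X : Type*) [LinearOrder X] : Prop :=
  ∀ (n : ℕ) (x y : Fin n → X), StrictMono x → StrictMono y →
    ∃ g : X ≃o X, ∀ i : Fin n, g (x i) = y i

open Set Filter Topology

attribute [local instance] vietorisTop

section Vietoris

variable {Z : Type*} [TopologicalSpace Z]

theorem isOpen_setOf_inter_nonempty {W : Set Z} (hW : IsOpen W) :
    IsOpen {A : HClosed Z | ((A : Set Z) ∩ W).Nonempty} :=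
  TopologicalSpace.isOpen_generateFrom_of_mem (Or.inl ⟨W, hW, rfl⟩)

theorem isOpen_setOf_subset {W : Set Z} (hW : IsOpen W) :
    IsOpen {A : HClosed Z | (A : Set Z) ⊆ W} :=
  TopologicalSpace.isOpen_generateFrom_of_mem (Or.inr ⟨W, hW, rfl⟩)

theorem isClosed_setOf_inter_nonempty {F : Set Z} (hF : IsClosed F) :
    IsClosed {A : HClosed Z | ((A : Set Z) ∩ F).Nonempty} := by
  rw [← isOpen_compl_iff]
  convert isOpen_setOf_subset hF.isOpen_compl using 1
  ext A
  simp [not_nonempty_iff_eq_empty, subset_compl_iff_disjoint_right, disjoint_iff_inter_eq_empty]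

theorem isClosed_setOf_forall_inter_nonempty {ι : Type*} {F : ι → Set Z}
    (hF : ∀ i, IsClosed (F i)) :
    IsClosed {A : HClosed Z | ∀ i, ((A : Set Z) ∩ F i).Nonempty} := by
  simpa only [ofPred_forall] using isClosed_iInter fun i => isClosed_setOf_inter_nonempty (hF i)

theorem isClosed_setOf_forall_mem_forall_mem {F : Set (Z × Z)} (hF : IsClosed F) :
    IsClosed {A : HClosed Z | ∀ p ∈ (A : Set Z), ∀ q ∈ (A : Set Z), (p, q) ∈ F} := by
  refine isOpen_compl_iff.1 (isOpen_iff_forall_mem_open.2 fun A hA => ?_)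
  simp only [mem_compl_iff, mem_ofPred_eq, not_forall] at hA
  obtain ⟨p, hp, q, hq, hpq⟩ := hA
  obtain ⟨U, V, hU, hV, hpU, hqV, hUV⟩ := isOpen_prod_iff.1 hF.isOpen_compl p q hpq
  refine ⟨{B | ((B : Set Z) ∩ U).Nonempty} ∩ {B | ((B : Set Z) ∩ V).Nonempty}, ?_,
    (isOpen_setOf_inter_nonempty hU).inter (isOpen_setOf_inter_nonempty hV),
    ⟨p, hp, hpU⟩, ⟨q, hq, hqV⟩⟩
  rintro B ⟨⟨p', hp', hp'U⟩, ⟨q', hq', hq'V⟩⟩ hB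
  exact hUV ⟨hp'U, hq'V⟩ (hB p' hp' q' hq')

end Vietoris

structure IsMonotoneCorrespondence {α : Type*} [LinearOrder α] (A : Set (α × α)) : Prop where
  mono : ∀ p ∈ A, ∀ q ∈ A, p.1 < q.1 → p.2 ≤ q.2
  left_total : ∀ a, ∃ b, (a, b) ∈ A
  right_total : ∀ b, ∃ a, (a, b) ∈ A

namespace IsMonotoneCorrespondence

variable {α : Type*} [LinearOrder α] {A B : Set (α × α)}

theorem swap (hA : IsMonotoneCorrespondence A) : IsMonotoneCorrespondence (Prod.swap ⁻¹' A) where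
  mono _ hp _ hq hpq := le_of_not_gt fun h => (hA.mono _ hq _ hp h).not_gt hpq
  left_total a := (hA.right_total a).imp fun _ h => h
  right_total b := (hA.left_total b).imp fun _ h => h

theorem orderDual (hA : IsMonotoneCorrespondence A) : IsMonotoneCorrespondence (α := αᵒᵈ) A where
  mono p hp q hq hpq := hA.mono q hq p hp hpq
  left_total := hA.left_total
  right_total := hA.right_total

theorem bot_mem [OrderBot α] (hA : IsMonotoneCorrespondence A) : ((⊥, ⊥) : α × α) ∈ A := by
  obtain ⟨b, hb⟩ := hA.left_total ⊥
  obtain ⟨a, ha⟩ := hA.right_total ⊥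
  rcases eq_bot_or_bot_lt a with rfl | ha0
  · exact ha
  · have hb0 : b = ⊥ := le_bot_iff.1 (hA.mono _ hb _ ha ha0)
    rwa [hb0] at hb

end IsMonotoneCorrespondence

def closedGraph {α : Type*} [LinearOrder α] [TopologicalSpace α] [OrderTopology α]
    (φ : α ≃o α) : HClosed (α × α) :=
  ⟨{p | p.2 = φ p.1}, isClosed_eq continuous_snd (φ.continuous.comp continuous_fst)⟩

theorem isMonotoneCorrespondence_closedGraph {α : Type*} [LinearOrder α] [TopologicalSpace α]
    [OrderTopology α] (φ : α ≃o α) : IsMonotoneCorrespondence (closedGraph φ : Set (α × α)) where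
  mono _ hp _ hq hpq := hp ▸ hq ▸ φ.monotone hpq.le
  left_total a := ⟨φ a, rfl⟩
  right_total b := ⟨φ.symm b, (φ.apply_symm_apply b).symm⟩

theorem isClosed_setOf_isMonotoneCorrespondence {α : Type*} [LinearOrder α] [TopologicalSpace α]
    [OrderClosedTopology α] :
    IsClosed {A : HClosed (α × α) | IsMonotoneCorrespondence (A : Set (α × α))} := by
  have hmono : IsClosed {z : (α × α) × (α × α) | z.1.1 < z.2.1 → z.1.2 ≤ z.2.2} := by
    simp only [imp_iff_not_or, not_lt, ofPred_or]
    exact (isClosed_le (by fun_prop) (by fun_prop)).union (isClosed_le (by fun_prop) (by fun_prop))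
  have hfst (a : α) : IsClosed {p : α × α | p.1 = a} := isClosed_eq continuous_fst continuous_const
  have hsnd (b : α) : IsClosed {p : α × α | p.2 = b} := isClosed_eq continuous_snd continuous_const
  convert ((isClosed_setOf_forall_mem_forall_mem hmono).inter
    (isClosed_setOf_forall_inter_nonempty hfst)).inter
    (isClosed_setOf_forall_inter_nonempty hsnd) using 1
  ext A
  simp only [mem_ofPred_eq, mem_inter_iff, Set.Nonempty, Prod.exists, exists_and_right,
    exists_eq_right]
  exact ⟨fun ⟨hm, hl, hr⟩ => ⟨⟨hm, hl⟩, hr⟩, fun ⟨⟨hm, hl⟩, hr⟩ => ⟨hm, hl, hr⟩⟩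

theorem closure_range_closedGraph_subset {α ι : Type*} [LinearOrder α] [TopologicalSpace α]
    [OrderTopology α] (Φ : ι → α ≃o α) :
    closure (range fun i => closedGraph (Φ i)) ⊆
      {A : HClosed (α × α) | IsMonotoneCorrespondence (A : Set (α × α))} :=
  closure_minimal (range_subset_iff.2 fun i => isMonotoneCorrespondence_closedGraph (Φ i))
    isClosed_setOf_isMonotoneCorrespondence

namespace IsMonotoneCorrespondence

variable {α : Type*} [LinearOrder α] [BoundedOrder α] [TopologicalSpace α] [OrderTopology α]
  [DenselyOrdered α] {A B : Set (α × α)}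

theorem mem_of_forall_exists_snd (hA : IsMonotoneCorrespondence A) (hAc : IsClosed A)
    {p c : α} (hc : ⊥ < c) (h : ∀ q ∈ Ioo ⊥ c, ∃ x, p ≤ x ∧ (x, q) ∈ A) : (p, ⊥) ∈ A := by
  obtain ⟨y, hy⟩ := hA.left_total p
  rcases eq_bot_or_bot_lt y with rfl | hy0
  · exact hy
  have hsub : {p} ×ˢ Ioo ⊥ (min y c) ⊆ A := by
    rintro ⟨_, q⟩ ⟨rfl, hq⟩
    obtain ⟨x, hpx, hx⟩ := h q ⟨hq.1, hq.2.trans_le (min_le_right _ _)⟩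
    rcases hpx.eq_or_lt with rfl | hpx
    · exact hx
    · exact absurd (hA.mono _ hy _ hx hpx) (hq.2.trans_le (min_le_left _ _)).not_ge
  refine hAc.closure_subset_iff.2 hsub ?_
  rw [closure_prod_eq, closure_singleton, closure_Ioo (lt_min hy0 hc).ne]
  exact ⟨rfl, le_rfl, bot_le⟩

theorem mem_of_snd_eq_bot (hA : IsMonotoneCorrespondence A) (hB : IsMonotoneCorrespondence B)
    (hBc : IsClosed B) (hAB : A ∩ Ioo ⊥ ⊤ ×ˢ Ioo ⊥ ⊤ ⊆ B) {r s : α} (hrs : (r, s) ∈ A)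
    (hr : r < ⊤) (hs : ⊥ < s) {p : α} (hp : (p, ⊥) ∈ A) : (p, ⊥) ∈ B := by
  rcases eq_bot_or_bot_lt p with rfl | hp0
  · exact hB.bot_mem
  refine hB.mem_of_forall_exists_snd hBc hs fun q hq => ?_
  obtain ⟨x, hx⟩ := hA.right_total q
  have hpx : p ≤ x := le_of_not_gt fun hxp => hq.1.not_ge (hA.mono _ hx _ hp hxp)
  have hxt : x < ⊤ := lt_top_iff_ne_top.2 fun hxt => hq.2.not_ge (hA.mono _ hrs _ (hxt ▸ hx) hr)
  exact ⟨x, hpx, hAB ⟨hx, ⟨hp0.trans_le hpx, hxt⟩, ⟨hq.1, hq.2.trans_le le_top⟩⟩⟩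

theorem mem_of_snd_eq_top (hA : IsMonotoneCorrespondence A) (hB : IsMonotoneCorrespondence B)
    (hBc : IsClosed B) (hAB : A ∩ Ioo ⊥ ⊤ ×ˢ Ioo ⊥ ⊤ ⊆ B) {r s : α} (hrs : (r, s) ∈ A)
    (hr : ⊥ < r) (hs : s < ⊤) {p : α} (hp : (p, ⊤) ∈ A) : (p, ⊤) ∈ B :=
  mem_of_snd_eq_bot (α := αᵒᵈ) hA.orderDual hB.orderDual hBc
    (fun _ hz => hAB ⟨hz.1, ⟨hz.2.1.2, hz.2.1.1⟩, ⟨hz.2.2.2, hz.2.2.1⟩⟩) hrs hr hs hp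

theorem mem_of_snd_notMem_Ioo (hA : IsMonotoneCorrespondence A) (hB : IsMonotoneCorrespondence B)
    (hBc : IsClosed B) (hAB : A ∩ Ioo ⊥ ⊤ ×ˢ Ioo ⊥ ⊤ ⊆ B) {r s : α} (hrs : (r, s) ∈ A)
    (hr : r ∈ Ioo ⊥ ⊤) (hs : s ∈ Ioo ⊥ ⊤) {x y : α} (hxy : (x, y) ∈ A) (hy : y ∉ Ioo ⊥ ⊤) :
    (x, y) ∈ B := by
  rcases eq_bot_or_bot_lt y with rfl | hy0
  · exact mem_of_snd_eq_bot hA hB hBc hAB hrs hr.2 hs.1 hxy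
  obtain rfl : y = ⊤ := not_lt_top_iff.1 fun hyt => hy ⟨hy0, hyt⟩
  exact mem_of_snd_eq_top hA hB hBc hAB hrs hr.1 hs.2 hxy

theorem subset_of_inter_subset (hA : IsMonotoneCorrespondence A)
    (hB : IsMonotoneCorrespondence B) (hBc : IsClosed B) (hAB : A ∩ Ioo ⊥ ⊤ ×ˢ Ioo ⊥ ⊤ ⊆ B)
    (hne : (A ∩ Ioo ⊥ ⊤ ×ˢ Ioo ⊥ ⊤).Nonempty) : A ⊆ B := by
  obtain ⟨⟨r, s⟩, hrs, hr, hs⟩ := hne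
  rintro ⟨x, y⟩ hxy
  by_cases hy : y ∈ Ioo ⊥ ⊤
  · by_cases hx : x ∈ Ioo ⊥ ⊤
    · exact hAB ⟨hxy, hx, hy⟩
    · exact mem_of_snd_notMem_Ioo (A := Prod.swap ⁻¹' A) hA.swap hB.swap
        (hBc.preimage continuous_swap) (fun _ hz => hAB ⟨hz.1, hz.2.2, hz.2.1⟩) hrs hs hr hxy hx
  · exact mem_of_snd_notMem_Ioo hA hB hBc hAB hrs hr hs hxy hy

theorem eq_of_inter_eq_empty_of_bot_mem (hA : IsMonotoneCorrespondence A) (hAc : IsClosed A)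
    (hAY : A ∩ Ioo ⊥ ⊤ ×ˢ Ioo ⊥ ⊤ = ∅) {k : α} (hk : k ∈ Ioo ⊥ ⊤) (hkA : (k, ⊥) ∈ A) :
    A = {p | p.2 = ⊥ ∨ p.1 = ⊤} := by
  have hAY' : ∀ x y, (x, y) ∈ A → x ∈ Ioo ⊥ ⊤ → y ∈ Ioo ⊥ ⊤ → False :=
    fun x y h hx hy => (hAY.subset ⟨h, hx, hy⟩ : (x, y) ∈ (∅ : Set (α × α)))
  have right : ∀ b ∈ Ioo ⊥ ⊤, (⊤, b) ∈ A := by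
    intro b hb
    obtain ⟨x, hx⟩ := hA.right_total b
    have hx0 : ⊥ < x := bot_lt_iff_ne_bot.2 fun hx0 => hb.1.not_ge (hA.mono _ (hx0 ▸ hx) _ hkA hk.1)
    obtain rfl : x = ⊤ := not_lt_top_iff.1 fun hxt => hAY' x b hx ⟨hx0, hxt⟩ hb
    exact hx
  have left : ∀ a ∈ Ioo ⊥ ⊤, (a, ⊥) ∈ A := by
    intro a ha
    obtain ⟨y, hy⟩ := hA.left_total a
    have hyt : y < ⊤ := lt_top_iff_ne_top.2 fun hyt =>
      hk.2.not_ge (hA.mono _ (hyt ▸ hy) _ (right k hk) ha.2)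
    obtain rfl : y = ⊥ := not_bot_lt_iff.1 fun hy0 => hAY' a y hy ha ⟨hy0, hyt⟩
    exact hy
  have hbt : (⊥ : α) < ⊤ := hk.1.trans hk.2
  have hIoo : closure (Ioo (⊥ : α) ⊤) = univ := by rw [closure_Ioo hbt.ne, Icc_bot_top]
  ext ⟨a, b⟩
  constructor
  · intro hab
    by_contra h
    simp only [mem_ofPred_eq, not_or] at h
    obtain ⟨b', hb'0, hb'⟩ := exists_between (bot_lt_iff_ne_bot.2 h.1)
    exact hb'.not_ge
      (hA.mono _ hab _ (right b' ⟨hb'0, hb'.trans_le le_top⟩) (lt_top_iff_ne_top.2 h.2))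
  · rintro (rfl | rfl)
    · have := closure_mono (s := Ioo ⊥ ⊤ ×ˢ {⊥}) fun _ ⟨hz, hz'⟩ => hz' ▸ left _ hz
      rw [closure_prod_eq, hIoo, closure_singleton, hAc.closure_eq] at this
      exact this ⟨mem_univ a, rfl⟩
    · have := closure_mono (s := {⊤} ×ˢ Ioo ⊥ ⊤) fun _ ⟨hz, hz'⟩ => hz ▸ right _ hz'
      rw [closure_prod_eq, hIoo, closure_singleton, hAc.closure_eq] at this
      exact this ⟨rfl, mem_univ b⟩

theorem eq_of_inter_eq_empty_of_top_mem (hA : IsMonotoneCorrespondence A) (hAc : IsClosed A)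
    (hAY : A ∩ Ioo ⊥ ⊤ ×ˢ Ioo ⊥ ⊤ = ∅) {k : α} (hk : k ∈ Ioo ⊥ ⊤) (hkA : (k, ⊤) ∈ A) :
    A = {p | p.2 = ⊤ ∨ p.1 = ⊥} :=
  eq_of_inter_eq_empty_of_bot_mem (α := αᵒᵈ) hA.orderDual hAc
    (eq_empty_of_subset_empty fun _ hz =>
      hAY.subset ⟨hz.1, ⟨hz.2.1.2, hz.2.1.1⟩, ⟨hz.2.2.2, hz.2.2.1⟩⟩)
    ⟨hk.2, hk.1⟩ hkA

theorem eq_of_inter_eq {A B : HClosed (α × α)} (hA : IsMonotoneCorrespondence (A : Set (α × α)))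
    (hB : IsMonotoneCorrespondence (B : Set (α × α)))
    (hAB : (A : Set (α × α)) ∩ Ioo ⊥ ⊤ ×ˢ Ioo ⊥ ⊤ = (B : Set (α × α)) ∩ Ioo ⊥ ⊤ ×ˢ Ioo ⊥ ⊤)
    (hne : ((A : Set (α × α)) ∩ Ioo ⊥ ⊤ ×ˢ Ioo ⊥ ⊤).Nonempty) : A = B :=
  Subtype.ext <| subset_antisymm
    (hA.subset_of_inter_subset hB B.2 (hAB ▸ inter_subset_left) hne)
    (hB.subset_of_inter_subset hA A.2 (hAB ▸ inter_subset_left) (hAB ▸ hne))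

theorem eq_or_eq_of_inter_eq_empty [Nontrivial α] (hA : IsMonotoneCorrespondence A)
    (hAc : IsClosed A) (hAY : A ∩ Ioo ⊥ ⊤ ×ˢ Ioo ⊥ ⊤ = ∅) :
    A = {p | p.2 = ⊥ ∨ p.1 = ⊤} ∨ A = {p | p.1 = ⊥ ∨ p.2 = ⊤} := by
  obtain ⟨k, hk⟩ := exists_between (bot_lt_top : (⊥ : α) < ⊤)
  obtain ⟨y, hy⟩ := hA.left_total k
  rcases eq_bot_or_bot_lt y with rfl | hy0
  · exact Or.inl (hA.eq_of_inter_eq_empty_of_bot_mem hAc hAY hk hy)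
  obtain rfl : y = ⊤ := not_lt_top_iff.1 fun hyt => hAY.subset ⟨hy, hk, hy0, hyt⟩
  exact Or.inr ((hA.eq_of_inter_eq_empty_of_top_mem hAc hAY hk hy).trans (Set.ext fun _ => or_comm))

end IsMonotoneCorrespondence

theorem inter_Ioo_prod_Ioo_eq_empty_of_bot {α : Type*} [LinearOrder α] [BoundedOrder α] :
    {p : α × α | p.2 = ⊥ ∨ p.1 = ⊤} ∩ Ioo ⊥ ⊤ ×ˢ Ioo ⊥ ⊤ = ∅ :=
  eq_empty_of_forall_notMem fun _ ⟨hp, hp1, hp2⟩ => hp.elim hp2.1.ne' hp1.2.ne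

theorem inter_Ioo_prod_Ioo_eq_empty_of_top {α : Type*} [LinearOrder α] [BoundedOrder α] :
    {p : α × α | p.1 = ⊥ ∨ p.2 = ⊤} ∩ Ioo ⊥ ⊤ ×ˢ Ioo ⊥ ⊤ = ∅ :=
  eq_empty_of_forall_notMem fun _ ⟨hp, hp1, hp2⟩ => hp.elim hp1.1.ne' hp2.2.ne

section GraphLimits

variable {K : Type*} [CompleteLinearOrder K] [TopologicalSpace K] [OrderTopology K]
  [DenselyOrdered K] [Nontrivial K]

theorem tendsto_closedGraph {ι : Type*} {l : Filter ι} {Φ : ι → K ≃o K}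
    (hΦ : ∀ k < ⊤, Tendsto (fun i => Φ i k) l (𝓝 ⊥)) {E : HClosed (K × K)}
    (hE : (E : Set (K × K)) = {p | p.2 = ⊥ ∨ p.1 = ⊤}) :
    Tendsto (fun i => closedGraph (Φ i)) l (𝓝 E) := by
  refine TopologicalSpace.tendsto_nhds_generateFrom_iff.2 ?_
  rintro s (⟨W, hW, rfl⟩ | ⟨W, hW, rfl⟩) hEW
  · obtain ⟨⟨a, b⟩, hab, habW⟩ := hEW
    obtain ⟨U, hU, V, hV, hUV⟩ := mem_nhds_prod_iff.1 (hW.mem_nhds habW)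
    rw [hE] at hab
    rcases hab with rfl | rfl
    · obtain ⟨a', ha'U, ha'⟩ : (U ∩ Iio ⊤).Nonempty := mem_closure_iff_nhds.1
        (by rw [closure_Iio' ⟨⊥, bot_lt_top⟩, Iic_top]; exact mem_univ a) U hU
      filter_upwards [hΦ a' ha' hV] with i hi
      exact ⟨(a', Φ i a'), rfl, hUV ⟨ha'U, hi⟩⟩
    · obtain ⟨b', hb'V, hb'⟩ : (V ∩ Ioi ⊥).Nonempty := mem_closure_iff_nhds.1
        (by rw [closure_Ioi' ⟨⊤, bot_lt_top⟩, Ici_bot]; exact mem_univ b) V hV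
      obtain ⟨d, hd, hdU⟩ := exists_Ioc_subset_of_mem_nhds hU ⟨⊥, bot_lt_top⟩
      filter_upwards [hΦ d hd (Iio_mem_nhds hb')] with i hi
      refine ⟨((Φ i).symm b', b'), ((Φ i).apply_symm_apply b').symm, hUV ⟨hdU ⟨?_, le_top⟩, hb'V⟩⟩
      exact (Φ i).lt_symm_apply.2 hi
  · obtain ⟨_, V, -, hV, hfst, hV0, hVW⟩ := generalized_tube_lemma isCompact_univ
      isCompact_singleton hW fun p hp => hEW (hE ▸ Or.inl hp.2)
    obtain ⟨U, _, hU, -, hUt, hsnd, hUW⟩ := generalized_tube_lemma isCompact_singleton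
      isCompact_univ hW fun p hp => hEW (hE ▸ Or.inr hp.1)
    obtain ⟨w, hw, hwV⟩ := exists_Ico_subset_of_mem_nhds (hV.mem_nhds (hV0 rfl)) ⟨⊤, bot_lt_top⟩
    obtain ⟨u, hu, huU⟩ := exists_Ioc_subset_of_mem_nhds (hU.mem_nhds (hUt rfl)) ⟨⊥, bot_lt_top⟩
    filter_upwards [hΦ u hu (Iio_mem_nhds hw)] with i hi
    rintro ⟨p, q⟩ (hq : q = Φ i p)
    subst hq
    rcases le_or_gt p u with hpu | hpu
    · exact hVW ⟨hfst (mem_univ _), hwV ⟨bot_le, ((Φ i).monotone hpu).trans_lt hi⟩⟩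
    · exact hUW ⟨huU ⟨hpu, le_top⟩, hsnd (mem_univ _)⟩

theorem mem_closure_range_closedGraph_of_bot {ι : Type*} {Φ : ι → K ≃o K}
    (hΦ : ∀ k < ⊤, ∀ c > ⊥, ∃ i, Φ i k < c) {E : HClosed (K × K)}
    (hE : (E : Set (K × K)) = {p | p.2 = ⊥ ∨ p.1 = ⊤}) :
    E ∈ closure (range fun i => closedGraph (Φ i)) := by
  let l : Filter ι := ⨅ j : Iio (⊤ : K) × Ioi (⊥ : K), 𝓟 {i | Φ i j.1 < j.2}
  have : l.NeBot := by
    have : Nonempty (Iio (⊤ : K) × Ioi (⊥ : K)) := ⟨(⟨⊥, bot_lt_top⟩, ⟨⊤, bot_lt_top⟩)⟩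
    refine iInf_neBot_of_directed' (fun j j' => ⟨(⟨max j.1 j'.1, max_lt j.1.2 j'.1.2⟩,
      ⟨min j.2 j'.2, lt_min j.2.2 j'.2.2⟩), ?_, ?_⟩) fun j => principal_neBot_iff.2 ?_
    · exact principal_mono.2 fun i hi =>
        ((Φ i).monotone (le_max_left _ _)).trans_lt (hi.trans_le (min_le_left _ _))
    · exact principal_mono.2 fun i hi =>
        ((Φ i).monotone (le_max_right _ _)).trans_lt (hi.trans_le (min_le_right _ _))
    · exact hΦ j.1 j.1.2 j.2 j.2.2
  refine mem_closure_of_tendsto (b := l) (tendsto_closedGraph (fun k hk => ?_) hE)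
    (Eventually.of_forall fun i => mem_range_self i)
  exact nhds_bot_basis.tendsto_right_iff.2 fun c hc =>
    mem_iInf_of_mem (⟨k, hk⟩, ⟨c, hc⟩) (mem_principal_self _)

theorem mem_closure_range_closedGraph_of_top {ι : Type*} {Φ : ι → K ≃o K}
    (hΦ : ∀ k > ⊥, ∀ c < ⊤, ∃ i, c < Φ i k) {E : HClosed (K × K)}
    (hE : (E : Set (K × K)) = {p | p.1 = ⊥ ∨ p.2 = ⊤}) :
    E ∈ closure (range fun i => closedGraph (Φ i)) :=
  mem_closure_range_closedGraph_of_bot (K := Kᵒᵈ) (Φ := fun i => (Φ i).dual) hΦ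
    (hE.trans (Set.ext fun _ => or_comm))

end GraphLimits

namespace UltrahomogeneousOrder

variable {X : Type*} [LinearOrder X]

theorem exists_apply_eq (hX : UltrahomogeneousOrder X) (a b : X) : ∃ g : X ≃o X, g a = b := by
  obtain ⟨g, hg⟩ := hX 1 ![a] ![b] (Subsingleton.strictMono _) (Subsingleton.strictMono _)
  exact ⟨g, hg 0⟩

theorem exists_apply_eq_apply_eq (hX : UltrahomogeneousOrder X) {a b c d : X} (hab : a < b)
    (hcd : c < d) : ∃ g : X ≃o X, g a = c ∧ g b = d := by
  obtain ⟨g, hg⟩ := hX 2 ![a, b] ![c, d] (by simp [Fin.strictMono_iff_lt_succ, hab])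
    (by simp [Fin.strictMono_iff_lt_succ, hcd])
  exact ⟨g, hg 0, hg 1⟩

theorem denselyOrdered [Nontrivial X] (hX : UltrahomogeneousOrder X) : DenselyOrdered X := by
  obtain ⟨u, v, huv⟩ := exists_pair_lt X
  obtain ⟨g, hg⟩ := hX.exists_apply_eq u v
  have hv : v < g v := hg.symm.trans_lt (g.strictMono huv)
  refine ⟨fun a b hab => ?_⟩
  obtain ⟨h, hu, hw⟩ := hX.exists_apply_eq_apply_eq (huv.trans hv) hab
  exact ⟨h v, hu ▸ h.strictMono huv, hw ▸ h.strictMono hv⟩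

end UltrahomogeneousOrder

section AutExtend

variable {X K : Type*} [LinearOrder X] [CompleteLinearOrder K] (e : X ↪o K)

theorem exists_between_apply_of_sSup_sInf [DenselyOrdered X]
    (hdense : ∀ k : K, k = sSup ((fun x : X => e x) '' {x : X | e x ≤ k}) ∧
      k = sInf ((fun x : X => e x) '' {x : X | k ≤ e x}))
    {a b : K} (hab : a < b) : ∃ x, a < e x ∧ e x < b := by
  obtain ⟨_, ⟨x, hxb, rfl⟩, hax⟩ := lt_sSup_iff.1 (hab.trans_eq (hdense b).1)
  obtain ⟨_, ⟨y, hay, rfl⟩, hyb⟩ := sInf_lt_iff.1 ((hdense a).2.symm.trans_lt hab)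
  rcases hxb.lt_or_eq with hxb | rfl
  · exact ⟨x, hax, hxb⟩
  rcases hay.lt_or_eq with hay | rfl
  · exact ⟨y, hay, hyb⟩
  obtain ⟨z, hyz, hzx⟩ := exists_between (e.lt_iff_lt.1 hab)
  exact ⟨z, e.strictMono hyz, e.strictMono hzx⟩

def autExtend (g : X ≃o X) (k : K) : K :=
  sSup ((fun x : X => e (g x)) '' {x : X | e x ≤ k})

theorem autExtend_mono (g : X ≃o X) : Monotone (autExtend e g) :=
  fun _ _ hk => sSup_le_sSup (image_mono fun _ hx => le_trans hx hk)

theorem autExtend_apply (g : X ≃o X) (x : X) : autExtend e g (e x) = e (g x) :=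
  le_antisymm (sSup_le (forall_mem_image.2 fun _ hy => by simpa using hy))
    (le_sSup (mem_image_of_mem _ (le_refl (e x))))

variable {e} (hbetween : ∀ a b : K, a < b → ∃ x, a < e x ∧ e x < b)
include hbetween

theorem autExtend_symm_autExtend (g : X ≃o X) (k : K) :
    autExtend e g.symm (autExtend e g k) = k := by
  apply le_antisymm
  · refine sSup_le (forall_mem_image.2 fun y hy => le_of_not_gt fun hk => ?_)
    obtain ⟨x, hkx, hxy⟩ := hbetween _ _ hk
    have : autExtend e g k ≤ e (g x) :=
      sSup_le (forall_mem_image.2 fun _ hx' => by simpa using (e.lt_iff_lt.1 (hx'.trans_lt hkx)).le)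
    exact (this.trans_lt (e.strictMono (g.lt_symm_apply.1 (e.lt_iff_lt.1 hxy)))).not_ge hy
  · refine le_of_not_gt fun hk => ?_
    obtain ⟨x, hx, hxk⟩ := hbetween _ _ hk
    have : e (g x) ≤ autExtend e g k := le_sSup (mem_image_of_mem _ hxk.le)
    exact hx.not_ge (le_sSup ⟨g x, this, by simp⟩)

def autExtendIso (g : X ≃o X) : K ≃o K :=
  Equiv.toOrderIso
    ⟨autExtend e g, autExtend e g.symm, autExtend_symm_autExtend hbetween g,
      fun k => by simpa using autExtend_symm_autExtend hbetween g.symm k⟩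
    (autExtend_mono e g) (autExtend_mono e g.symm)

theorem exists_autExtendIso_lt (hX : UltrahomogeneousOrder X) {k c : K} (hk : k < ⊤) (hc : ⊥ < c) :
    ∃ g, autExtendIso hbetween g k < c := by
  obtain ⟨a, hka, -⟩ := hbetween _ _ hk
  obtain ⟨b, -, hbc⟩ := hbetween _ _ hc
  obtain ⟨g, hg⟩ := hX.exists_apply_eq a b
  refine ⟨g, (autExtend_mono e g hka.le).trans_lt ?_⟩
  rwa [autExtend_apply, hg]

theorem exists_lt_autExtendIso (hX : UltrahomogeneousOrder X) {k c : K} (hk : ⊥ < k) (hc : c < ⊤) :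
    ∃ g, c < autExtendIso hbetween g k := by
  obtain ⟨g, hg⟩ := exists_autExtendIso_lt hbetween hX hc hk
  exact ⟨g.symm, (autExtendIso hbetween g).lt_symm_apply.2 hg⟩

end AutExtend

/-- Condition (ER) for the graph compactification of `Aut(X)` of an infinite ultrahomogeneous
LOTS `X`: with `K` its least linearly ordered compactification, `Y = K \ {⊥, ⊤}` and `C` the
closure of the graphs `{Γ(ĝ)}` in the Vietoris hyperspace of `K × K`, (i) two members of `C`
with equal nonempty trace on `Y × Y` coincide, and (ii) the only members of `C` whose trace
on `Y × Y` is empty are `(K × {⊥}) ∪ ({⊤} × K)` and `({⊥} × K) ∪ (K × {⊤})`. -/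
theorem stmt_19 {X K : Type*} [LinearOrder X] [Infinite X]
    (hX : UltrahomogeneousOrder X)
    [CompleteLinearOrder K] [TopologicalSpace K] [OrderTopology K]
    (e : X ↪o K)
    (hdense : ∀ k : K, k = sSup ((fun x : X => e x) '' {x : X | e x ≤ k}) ∧
                       k = sInf ((fun x : X => e x) '' {x : X | k ≤ e x}))
    (hatf : (X ≃o X) → K → K)
    (hhat : ∀ (g : X ≃o X) (k : K),
      hatf g k = sSup ((fun x : X => e (g x)) '' {x : X | e x ≤ k}))
    (C : Set (HClosed (K × K)))
    (hC : C = @closure _ (vietorisTop (K × K))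
      {A : HClosed (K × K) | ∃ g : X ≃o X,
        (A : Set (K × K)) = {p : K × K | p.2 = hatf g p.1}})
    (YY : Set (K × K))
    (hYY : YY = {p : K × K | p.1 ≠ ⊥ ∧ p.1 ≠ ⊤ ∧ p.2 ≠ ⊥ ∧ p.2 ≠ ⊤}) :
    (∀ A ∈ C, ∀ B ∈ C, (A : Set (K × K)) ∩ YY = (B : Set (K × K)) ∩ YY →
        ((A : Set (K × K)) ∩ YY).Nonempty → A = B) ∧
    {A : HClosed (K × K) | A ∈ C ∧ (A : Set (K × K)) ∩ YY = ∅} =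
      {A : HClosed (K × K) |
        (A : Set (K × K)) = {p : K × K | p.2 = ⊥ ∨ p.1 = ⊤} ∨
        (A : Set (K × K)) = {p : K × K | p.1 = ⊥ ∨ p.2 = ⊤}} := by
  have := hX.denselyOrdered
  have hbetween : ∀ a b : K, a < b → ∃ x, a < e x ∧ e x < b :=
    fun _ _ => exists_between_apply_of_sSup_sInf e hdense
  have : DenselyOrdered K := ⟨fun a b hab => let ⟨x, hx⟩ := hbetween a b hab; ⟨e x, hx⟩⟩
  have : Nontrivial K := e.injective.nontrivial
  obtain rfl : hatf = fun g => ⇑(autExtendIso hbetween g) := funext₂ hhat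
  replace hC : C = closure (range fun g => closedGraph (autExtendIso hbetween g)) := by
    rw [hC]
    congr 1
    ext A
    exact ⟨fun ⟨g, hg⟩ => ⟨g, Subtype.ext hg.symm⟩, fun ⟨g, hg⟩ => ⟨g, hg ▸ rfl⟩⟩
  obtain rfl : YY = Ioo ⊥ ⊤ ×ˢ Ioo ⊥ ⊤ := by
    rw [hYY]
    ext
    simp [bot_lt_iff_ne_bot, lt_top_iff_ne_top, and_assoc]
  have hmono : ∀ A ∈ C, IsMonotoneCorrespondence (A : Set (K × K)) := fun A hA =>
    closure_range_closedGraph_subset _ (hC ▸ hA)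
  refine ⟨fun A hA B hB => (hmono A hA).eq_of_inter_eq (hmono B hB), Set.ext fun A => ⟨?_, ?_⟩⟩
  · rintro ⟨hA, hAY⟩
    exact (hmono A hA).eq_or_eq_of_inter_eq_empty A.2 hAY
  · rintro (hA | hA)
    · exact ⟨hC ▸ mem_closure_range_closedGraph_of_bot
        (fun _ hk _ hc => exists_autExtendIso_lt hbetween hX hk hc) hA,
        hA ▸ inter_Ioo_prod_Ioo_eq_empty_of_bot⟩
    · exact ⟨hC ▸ mem_closure_range_closedGraph_of_top
        (fun _ hk _ hc => exists_lt_autExtendIso hbetween hX hk hc) hA,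
        hA ▸ inter_Ioo_prod_Ioo_eq_empty_of_top⟩
end
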